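/- Let S be an inverse semigroup with zero and let s, t ∈ S. Then (i) s ≼ t implies s*s ≼ t*t, and (ii) s ≈ t implies s*s ≈ t*t. -/
import Mathlib


/-- An inverse semigroup with zero: a semigroup with zero in which every element `s` has a
unique generalized inverse `sInv s` with `s * sInv s * s = s` and `sInv s * s * sInv s = sInv s`. -/
class InverseSemigroup0 (S : Type*) extends SemigroupWithZero S where
  sInv : S → S
  mul_sInv_mul : ∀ s : S, s * sInv s * s = s
  sInv_mul_sInv : ∀ s : S, sInv s * s * sInv s = sInv s
  sInv_unique : ∀ s t : S, s * t * s = s → t * s * t = t → t = sInv s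

open InverseSemigroup0 in
/-- `C` is a (finite) cover for the idempotent `f` within the idempotent semilattice `E(S)`:
all members of `C` are idempotents below `f`, and every nonzero idempotent `g ≤ f`
intersects some member of `C`. (Here `e ≤ f` means `e * f = e`.) -/
def IdemCover {S : Type*} [InverseSemigroup0 S] (C : Finset S) (f : S) : Prop :=
  (∀ c ∈ C, IsIdempotentElem c ∧ c * f = c) ∧
  ∀ g : S, IsIdempotentElem g → g ≠ 0 → g * f = g → ∃ c ∈ C, g * c ≠ 0

/-- The tight order on the idempotent semilattice `E(S)`: `e ≼ f` iff there is no nonzero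
idempotent `g` with `g ≤ e` and `g * f = 0`. -/
def IdemTightBelow {S : Type*} [InverseSemigroup0 S] (e f : S) : Prop :=
  ¬ ∃ g : S, IsIdempotentElem g ∧ g ≠ 0 ∧ g * e = g ∧ g * f = 0

open InverseSemigroup0 in
/-- The tight order on an inverse semigroup with zero: `s ≼ t` iff there is a finite cover
`C` for `s* s` such that `s * c = t * c` for all `c ∈ C`. -/
def TightBelowS {S : Type*} [InverseSemigroup0 S] (s t : S) : Prop :=
  ∃ C : Finset S, IdemCover C (sInv s * s) ∧ ∀ c ∈ C, s * c = t * c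

/-- Tight equivalence on an inverse semigroup with zero. -/
def TightEquivS {S : Type*} [InverseSemigroup0 S] (s t : S) : Prop :=
  TightBelowS s t ∧ TightBelowS t s


namespace InverseSemigroup0
variable {S : Type*} [InverseSemigroup0 S]

lemma sInv_sInv (s : S) : sInv (sInv s) = s :=
  (sInv_unique (sInv s) s (sInv_mul_sInv s) (mul_sInv_mul s)).symm

lemma idem_sInv_mul (s : S) : IsIdempotentElem (sInv s * s) := by
  show sInv s * s * (sInv s * s) = sInv s * s
  rw [mul_assoc, ← mul_assoc s, mul_sInv_mul]

lemma idem_mul_sInv (s : S) : IsIdempotentElem (s * sInv s) := by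
  show s * sInv s * (s * sInv s) = s * sInv s
  rw [mul_assoc, ← mul_assoc (sInv s), sInv_mul_sInv]

lemma sInv_idem {e : S} (he : IsIdempotentElem e) : sInv e = e :=
  (sInv_unique e e (by rw [he, he]) (by rw [he, he])).symm

lemma idem_mul_idem {e f : S} (he : IsIdempotentElem e) (hf : IsIdempotentElem f) :
    IsIdempotentElem (e * f) := by
  have he' : ∀ x : S, e * (e * x) = e * x := fun x => by rw [← mul_assoc, he]
  have hf' : ∀ x : S, f * (f * x) = f * x := fun x => by rw [← mul_assoc, hf]
  set x := sInv (e * f) with hx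
  have h1 : f * x * e = sInv (e * f) := by
    apply sInv_unique
    · have := mul_sInv_mul (e * f)
      calc e * f * (f * x * e) * (e * f)
          = e * (f * (f * (x * (e * (e * f))))) := by simp only [mul_assoc]
        _ = e * (f * (x * (e * f))) := by rw [hf', he']
        _ = e * f * x * (e * f) := by simp only [mul_assoc]
        _ = e * f := by rw [hx, mul_sInv_mul]
    · calc f * x * e * (e * f) * (f * x * e)
          = f * (x * (e * (e * (f * (f * (x * e)))))) := by simp only [mul_assoc]
        _ = f * (x * (e * (f * (x * e)))) := by rw [he', hf']
        _ = f * (x * (e * f) * x * e) := by simp only [mul_assoc]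
        _ = f * (x * e) := by rw [hx, sInv_mul_sInv]
        _ = f * x * e := by rw [mul_assoc]
  have hxidem : IsIdempotentElem x := by
    show x * x = x
    have h2 : x = f * x * e := by rw [h1, ← hx]
    calc x * x = f * x * e * (f * x * e) := by rw [← h2]
        _ = f * (x * (e * f) * x) * e := by simp only [mul_assoc]
        _ = f * sInv (e * f) * e := by rw [hx, sInv_mul_sInv]
        _ = x := by rw [← hx, ← h2]
  have : e * f = sInv x := by rw [hx, sInv_sInv]
  rw [this, sInv_idem hxidem]; exact hxidem

lemma idem_comm {e f : S} (he : IsIdempotentElem e) (hf : IsIdempotentElem f) :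
    e * f = f * e := by
  have hef := idem_mul_idem he hf
  have hfe := idem_mul_idem hf he
  have h : f * e = sInv (e * f) := by
    apply sInv_unique
    · calc e * f * (f * e) * (e * f) = e * (f * f) * (e * e) * f := by simp only [mul_assoc]
        _ = e * f * (e * f) := by rw [he, hf]; simp only [mul_assoc]
        _ = e * f := hef
    · calc f * e * (e * f) * (f * e) = f * (e * e) * (f * f) * e := by simp only [mul_assoc]
        _ = f * e * (f * e) := by rw [he, hf]; simp only [mul_assoc]
        _ = f * e := hfe
  rw [h, sInv_idem hef]

lemma sInv_mul (a b : S) : sInv (a * b) = sInv b * sInv a := by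
  have h1 : b * sInv b * (sInv a * a) = sInv a * a * (b * sInv b) :=
    idem_comm (idem_mul_sInv b) (idem_sInv_mul a)
  symm; apply sInv_unique
  · calc a * b * (sInv b * sInv a) * (a * b)
        = a * (b * sInv b * (sInv a * a)) * b := by simp only [mul_assoc]
      _ = a * (sInv a * a * (b * sInv b)) * b := by rw [h1]
      _ = (a * sInv a * a) * (b * sInv b * b) := by simp only [mul_assoc]
      _ = a * b := by rw [mul_sInv_mul, mul_sInv_mul]
  · calc sInv b * sInv a * (a * b) * (sInv b * sInv a)
        = sInv b * (sInv a * a * (b * sInv b)) * sInv a := by simp only [mul_assoc]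
      _ = sInv b * (b * sInv b * (sInv a * a)) * sInv a := by rw [← h1]
      _ = (sInv b * b * sInv b) * (sInv a * a * sInv a) := by simp only [mul_assoc]
      _ = sInv b * sInv a := by rw [sInv_mul_sInv, sInv_mul_sInv]

end InverseSemigroup0

section Aux
open InverseSemigroup0
variable {S : Type*} [InverseSemigroup0 S]

lemma tightBelowS_star_mul_aux {s t : S} (h : TightBelowS s t) :
    TightBelowS (sInv s * s) (sInv t * t) := by
  obtain ⟨C, hC, hst⟩ := h
  refine ⟨C, ?_, ?_⟩
  · rwa [sInv_idem (idem_sInv_mul s), idem_sInv_mul s]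
  · intro c hc
    obtain ⟨hci, hce⟩ := hC.1 c hc
    have hec : sInv s * s * c = c := by
      rw [idem_comm (idem_sInv_mul s) hci, hce]
    have key : c * (sInv t * t * c) = c := by
      have h0 : sInv (s * c) * (s * c) = sInv (t * c) * (t * c) := by rw [hst c hc]
      rw [sInv_mul, sInv_mul, sInv_idem hci] at h0
      calc c * (sInv t * t * c) = c * sInv t * (t * c) := by simp only [mul_assoc]
        _ = c * sInv s * (s * c) := h0.symm
        _ = c * (sInv s * s * c) := by simp only [mul_assoc]
        _ = c * c := by rw [hec]
        _ = c := hci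
    have hcomm : c * (sInv t * t) = sInv t * t * c := idem_comm hci (idem_sInv_mul t)
    have hfc : sInv t * t * c = c := by
      calc sInv t * t * c = c * (sInv t * t) * c := by rw [hcomm, mul_assoc (sInv t * t) c c, hci.eq]
        _ = c * (sInv t * t * c) := by rw [mul_assoc]
        _ = c := key
    rw [hec, hfc]
end Aux

open InverseSemigroup0 in
/-- In an inverse semigroup with zero: (i) `s ≼ t` implies `s* s ≼ t* t`,
and (ii) `s ≈ t` implies `s* s ≈ t* t` (tight order and tight equivalence on `S`). -/
theorem tightBelowS_star_mul {S : Type*} [InverseSemigroup0 S] (s t : S) :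
    (TightBelowS s t → TightBelowS (sInv s * s) (sInv t * t)) ∧
    (TightEquivS s t → TightEquivS (sInv s * s) (sInv t * t)) := by
  refine ⟨tightBelowS_star_mul_aux, fun h => ⟨tightBelowS_star_mul_aux h.1, tightBelowS_star_mul_aux h.2⟩⟩
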